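/- arXiv:1209.0189 — 5 statements merged into one kernel-verified Lean document; each statement's English description precedes it below -/
import Mathlib

section
/- Let (X_i) be i.i.d. uniform on {-1,1} and S_n = X_1 + ... + X_n the simple random walk. Define τ_0 = 0 and τ_{l+1} = min{ i > τ_l : S_{i-1} S_{i+1} < 0 }. Define X̄_j = Σ_{l≥0} (-1)^l X_1 X_{j+1} 1_{τ_l+1 ≤ j ≤ τ_{l+1}}. Then the process S̄_n = X̄_1 + ... + X̄_n is again a simple random walk (i.e., its increments are i.i.d. uniform on {-1,1}). -/
/-!
Write `X̄_j = ε_j X_{j+1}` with `ε_j = (-1)^l X_1`. The sign `ε_j` is a function of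
`X_1, …, X_j`, while `X_{j+1}` is symmetric and independent of `X_1, …, X_j`; multiplying a
symmetric variable by an independent sign leaves it symmetric and independent of the past. So
each `X̄_j` is uniform on `{±1}` and independent of `σ(X_1, …, X_j)`, which already contains
`X̄_1, …, X̄_{j-1}`, and the independence of the whole sequence follows by splitting off the
largest index of a finite family.
-/

open MeasureTheory ProbabilityTheory Filter

noncomputable section

/-- Increment `X_i = S_i - S_{i-1}` of a walk. -/
def inc (S : ℕ → ℤ) (i : ℕ) : ℤ := S i - S (i - 1)

/-- The times `τ_l` of the Csáki–Vincze construction. -/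
def cvTau (S : ℕ → ℤ) : ℕ → ℕ
  | 0 => 0
  | l + 1 => sInf {i | cvTau S l < i ∧ S (i - 1) * S (i + 1) < 0}

/-- The index `l` such that `τ_l + 1 ≤ j ≤ τ_{l+1}`, i.e. the number of
sign-change times strictly before `j`. -/
def cvEll (S : ℕ → ℤ) (j : ℕ) : ℕ :=
  ((Finset.range j).filter fun i => 0 < i ∧ S (i - 1) * S (i + 1) < 0).card

/-- The increments `X̄_j = (-1)^l X_1 X_{j+1}`, `τ_l + 1 ≤ j ≤ τ_{l+1}`. -/
def cvBarX (S : ℕ → ℤ) (j : ℕ) : ℤ := (-1) ^ cvEll S j * inc S 1 * inc S (j + 1)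

/-- The Csáki–Vincze transform `T(S)_n = X̄_1 + ⋯ + X̄_n`. -/
def CV (S : ℕ → ℤ) (n : ℕ) : ℤ := ∑ j ∈ Finset.range n, cvBarX S (j + 1)

/-- Iterates of the Csáki–Vincze transform. -/
def CViter : ℕ → (ℕ → ℤ) → ℕ → ℤ
  | 0, S => S
  | h + 1, S => CV (CViter h S)

/-- `S` is a simple random walk: `S_0 = 0` and the increments are
i.i.d. uniform on `{-1, 1}`. -/
def IsSRW {Ω : Type*} [MeasurableSpace Ω] (P : Measure Ω) (S : Ω → ℕ → ℤ) : Prop :=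
  (∀ ω, S ω 0 = 0) ∧
  (∀ ω i, S ω (i + 1) - S ω i = 1 ∨ S ω (i + 1) - S ω i = -1) ∧
  (∀ i, Measurable fun ω => S ω i) ∧
  iIndepFun (fun i ω => S ω (i + 1) - S ω i) P ∧
  (∀ i, P {ω | S ω (i + 1) - S ω i = 1} = 1 / 2) ∧
  (∀ i, P {ω | S ω (i + 1) - S ω i = -1} = 1 / 2)


section SignFlip

variable {Ω R : Type*} {m mΩ : MeasurableSpace Ω} {P : Measure Ω} [Ring R] [MeasurableSpace R]
  [MeasurableSingletonClass R] [MeasurableNeg R] {ε X : Ω → R}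

theorem measure_inter_preimage_sign_mul (hm : m ≤ mΩ) (hε : Measurable[m] ε)
    (hε_sign : ∀ ω, ε ω = 1 ∨ ε ω = -1) (hX : Measurable X)
    (hX_symm : P.map (fun ω => -X ω) = P.map X)
    (hindep : Indep (MeasurableSpace.comap X inferInstance) m P)
    {A : Set Ω} (hA : MeasurableSet[m] A) {B : Set R} (hB : MeasurableSet B) :
    P (A ∩ (fun ω => ε ω * X ω) ⁻¹' B) = P A * P (X ⁻¹' B) := by
  set E := {ω | ε ω = 1}
  have hE : MeasurableSet[m] E := hε (measurableSet_singleton 1)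
  have hsplit : A ∩ (fun ω => ε ω * X ω) ⁻¹' B
      = X ⁻¹' B ∩ (A ∩ E) ∪ X ⁻¹' (Neg.neg ⁻¹' B) ∩ (A \ E) := by
    ext ω
    by_cases h : ε ω = 1
    · simp [E, h, and_comm]
    · have hω : ω ∉ E := h
      simp [hω, (hε_sign ω).resolve_left h, and_comm]
  have hdisj : Disjoint (X ⁻¹' B ∩ (A ∩ E)) (X ⁻¹' (Neg.neg ⁻¹' B) ∩ (A \ E)) :=
    Set.disjoint_left.2 fun _ h1 h2 => h2.2.2 h1.2.2
  have hneg : P (X ⁻¹' (Neg.neg ⁻¹' B)) = P (X ⁻¹' B) := by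
    rw [show X ⁻¹' (Neg.neg ⁻¹' B) = (fun ω => -X ω) ⁻¹' B from rfl,
      ← Measure.map_apply (f := fun ω => -X ω) hX.neg hB, hX_symm, Measure.map_apply hX hB]
  have hindep' := (Indep_iff _ _ P).1 hindep
  rw [hsplit, measure_union hdisj ((hX (measurable_neg hB)).inter (hm _ (hA.diff hE))),
    hindep' _ _ ⟨B, hB, rfl⟩ (hA.inter hE), hindep' _ _ ⟨_, measurable_neg hB, rfl⟩ (hA.diff hE),
    hneg, ← mul_add, measure_inter_add_sdiff _ (hm _ hE), mul_comm]

variable [IsProbabilityMeasure P]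

theorem measure_preimage_sign_mul (hm : m ≤ mΩ) (hε : Measurable[m] ε)
    (hε_sign : ∀ ω, ε ω = 1 ∨ ε ω = -1) (hX : Measurable X)
    (hX_symm : P.map (fun ω => -X ω) = P.map X)
    (hindep : Indep (MeasurableSpace.comap X inferInstance) m P)
    {B : Set R} (hB : MeasurableSet B) :
    P ((fun ω => ε ω * X ω) ⁻¹' B) = P (X ⁻¹' B) := by
  simpa using measure_inter_preimage_sign_mul hm hε hε_sign hX hX_symm hindep
    MeasurableSet.univ hB

theorem indep_comap_sign_mul (hm : m ≤ mΩ) (hε : Measurable[m] ε)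
    (hε_sign : ∀ ω, ε ω = 1 ∨ ε ω = -1) (hX : Measurable X)
    (hX_symm : P.map (fun ω => -X ω) = P.map X)
    (hindep : Indep (MeasurableSpace.comap X inferInstance) m P) :
    Indep (MeasurableSpace.comap (fun ω => ε ω * X ω) inferInstance) m P := by
  rw [Indep_iff]
  rintro _ A ⟨B, hB, rfl⟩ hA
  rw [Set.inter_comm, measure_inter_preimage_sign_mul hm hε hε_sign hX hX_symm hindep hA hB,
    measure_preimage_sign_mul hm hε hε_sign hX hX_symm hindep hB, mul_comm]

end SignFlip

theorem iIndepFun_of_indep_filtration {Ω β : Type*} {mΩ : MeasurableSpace Ω}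
    [MeasurableSpace β] {P : Measure Ω} [IsProbabilityMeasure P] (F : Filtration ℕ mΩ)
    {Y : ℕ → Ω → β} (hY : ∀ n, Measurable[F (n + 1)] (Y n))
    (hindep : ∀ n, Indep (MeasurableSpace.comap (Y n) inferInstance) (F n) P) :
    iIndepFun Y P := by
  rw [iIndepFun_iff_measure_inter_preimage_eq_mul]
  intro J
  induction J using Finset.induction_on_max with
  | empty => simp
  | insert a J hlt ih =>
    intro B hB
    have hpast : MeasurableSet[F a] (⋂ j ∈ J, Y j ⁻¹' B j) :=
      .biInter J.countable_toSet fun j hj =>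
        F.mono (Nat.succ_le_of_lt (hlt j hj)) _ (hY j (hB j (J.mem_insert_of_mem hj)))
    have hnew : MeasurableSet[MeasurableSpace.comap (Y a) inferInstance] (Y a ⁻¹' B a) :=
      ⟨B a, hB a (J.mem_insert_self a), rfl⟩
    rw [Finset.set_biInter_insert, Finset.prod_insert fun ha => lt_irrefl a (hlt a ha),
      (Indep_iff _ _ P).1 (hindep a) _ _ hnew hpast,
      ih fun j hj => hB j (J.mem_insert_of_mem hj)]

theorem iIndepFun_sign_mul_of_filtration {Ω R : Type*} {mΩ : MeasurableSpace Ω}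
    {P : Measure Ω} [IsProbabilityMeasure P] [Ring R] [MeasurableSpace R]
    [MeasurableSingletonClass R] [MeasurableNeg R] [MeasurableMul₂ R] (F : Filtration ℕ mΩ)
    {ε X : ℕ → Ω → R} (hε : ∀ n, Measurable[F n] (ε n))
    (hε_sign : ∀ n ω, ε n ω = 1 ∨ ε n ω = -1) (hX : ∀ n, Measurable[F n] (X n))
    (hX_symm : ∀ n, P.map (fun ω => -X n ω) = P.map (X n))
    (hindep : ∀ n, Indep (MeasurableSpace.comap (X (n + 1)) inferInstance) (F n) P) :
    iIndepFun (fun n ω => ε n ω * X (n + 1) ω) P :=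
  iIndepFun_of_indep_filtration F
    (fun n => ((hε n).mono (F.mono n.le_succ) le_rfl).mul (hX (n + 1)))
    fun n => indep_comap_sign_mul (F.le n) (hε n) (hε_sign n) ((hX (n + 1)).mono (F.le _) le_rfl)
      (hX_symm (n + 1)) (hindep n)

theorem iIndepFun.indep_comap_succ_natural {Ω β : Type*} {mΩ : MeasurableSpace Ω}
    [TopologicalSpace β] [TopologicalSpace.MetrizableSpace β] [mβ : MeasurableSpace β]
    [BorelSpace β] {P : Measure Ω} {X : ℕ → Ω → β} (hX : ∀ n, StronglyMeasurable (X n))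
    (h : iIndepFun X P) (n : ℕ) :
    Indep (MeasurableSpace.comap (X (n + 1)) mβ) (Filtration.natural X hX n) P := by
  have := indep_iSup_of_disjoint (fun i => (hX i).measurable.comap_le) h
    (S := {n + 1}) (T := Set.Iic n) (by simp)
  simp only [Set.mem_singleton_iff, iSup_iSup_eq_left, Set.mem_Iic] at this
  exact this

theorem map_neg_eq_map_of_sign {Ω : Type*} {mΩ : MeasurableSpace Ω} {P : Measure Ω}
    {X : Ω → ℤ} (hX : Measurable X) (hX_sign : ∀ ω, X ω = 1 ∨ X ω = -1)
    (hX_half : P {ω | X ω = 1} = P {ω | X ω = -1}) :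
    P.map (fun ω => -X ω) = P.map X := by
  refine Measure.ext_of_singleton fun z => ?_
  have hempty : ∀ w, w ≠ 1 → w ≠ -1 → X ⁻¹' {w} = ∅ := fun w h1 h2 =>
    Set.eq_empty_of_forall_notMem fun ω hω => by rcases hX_sign ω with h | h <;> simp_all
  rw [Measure.map_apply (f := fun ω => -X ω) hX.neg (measurableSet_singleton z),
    Measure.map_apply hX (measurableSet_singleton z),
    show (fun ω => -X ω) ⁻¹' {z} = X ⁻¹' {-z} by ext; simp [neg_eq_iff_eq_neg]]
  rcases eq_or_ne z 1 with rfl | h1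
  · exact hX_half.symm
  rcases eq_or_ne z (-1) with rfl | h2
  · rw [neg_neg]; exact hX_half
  rw [hempty z h1 h2, hempty (-z) (by omega) (by omega)]

def cvSign (S : ℕ → ℤ) (j : ℕ) : ℤ := (-1) ^ cvEll S j * inc S 1

theorem CV_succ_sub (S : ℕ → ℤ) (n : ℕ) :
    CV S (n + 1) - CV S n = cvSign S (n + 1) * (S (n + 2) - S (n + 1)) := by
  rw [CV, CV, Finset.sum_range_succ, add_sub_cancel_left]
  rfl

theorem cvSign_eq_one_or_neg_one {S : ℕ → ℤ} (h : S 1 - S 0 = 1 ∨ S 1 - S 0 = -1) (j : ℕ) :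
    cvSign S j = 1 ∨ cvSign S j = -1 := by
  rcases neg_one_pow_eq_or ℤ (cvEll S j) with h' | h' <;> rcases h with h | h <;>
    simp [cvSign, inc, h, h']

section Measurability

variable {Ω : Type*} {m : MeasurableSpace Ω} {S : Ω → ℕ → ℤ} {j : ℕ}

theorem measurable_cvEll (hS : ∀ k ≤ j, Measurable[m] fun ω => S ω k) :
    Measurable[m] fun ω => cvEll (S ω) j := by
  simp only [cvEll, Finset.card_filter]
  refine Finset.measurable_sum _ fun i hi => Measurable.ite ?_ measurable_const measurable_const
  have hi := Finset.mem_range.1 hi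
  exact (MeasurableSet.const (0 < i)).inter
    (((hS (i - 1) (by omega)).mul (hS (i + 1) (by omega))) measurableSet_Iio)

theorem measurable_cvSign (hj : 1 ≤ j) (hS : ∀ k ≤ j, Measurable[m] fun ω => S ω k) :
    Measurable[m] fun ω => cvSign (S ω) j :=
  (Measurable.of_discrete.comp (measurable_cvEll hS)).mul ((hS 1 hj).sub (hS 0 (by omega)))

theorem measurable_natural_increments (h0 : ∀ ω, S ω 0 = 0)
    (hξ : ∀ i, StronglyMeasurable fun ω => S ω (i + 1) - S ω i) {n k : ℕ} (hk : k ≤ n + 1) :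
    Measurable[Filtration.natural (fun i ω => S ω (i + 1) - S ω i) hξ n] fun ω => S ω k := by
  have hsum : (fun ω => S ω k) = fun ω => ∑ i ∈ Finset.range k, (S ω (i + 1) - S ω i) := by
    funext ω
    rw [Finset.sum_range_sub, h0, sub_zero]
  rw [hsum]
  refine Finset.measurable_sum _ fun i hi => ?_
  have hi := Finset.mem_range.1 hi
  exact ((Filtration.stronglyAdapted_natural hξ i).mono
    (Filtration.mono _ (by omega))).measurable

end Measurability

/-- The Csáki–Vincze transform of a simple random walk is
again a simple random walk. -/
theorem csaki_vincze_is_srw {Ω : Type*} [MeasurableSpace Ω] (P : Measure Ω)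
    [IsProbabilityMeasure P] (S : Ω → ℕ → ℤ) (hS : IsSRW P S) :
    IsSRW P fun ω => CV (S ω) := by
  obtain ⟨h0, hξ_sign, hS_meas, hξ_indep, hξ_one, hξ_neg_one⟩ := hS
  have hξ : ∀ i, StronglyMeasurable fun ω => S ω (i + 1) - S ω i := fun i =>
    ((hS_meas (i + 1)).sub (hS_meas i)).stronglyMeasurable
  set F := Filtration.natural _ hξ
  have hξ_adapted : ∀ i, Measurable[F i] fun ω => S ω (i + 1) - S ω i := fun i =>
    (Filtration.stronglyAdapted_natural hξ i).measurable
  have hξ_symm : ∀ i,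
      P.map (fun ω => -(S ω (i + 1) - S ω i)) = P.map fun ω => S ω (i + 1) - S ω i := fun i =>
    map_neg_eq_map_of_sign (hξ i).measurable (hξ_sign · i) (by rw [hξ_one, hξ_neg_one])
  have hξ_indep' := iIndepFun.indep_comap_succ_natural hξ hξ_indep
  have hε : ∀ n, Measurable[F n] fun ω => cvSign (S ω) (n + 1) := fun n =>
    measurable_cvSign n.succ_pos fun _ hk => measurable_natural_increments h0 _ hk
  have hε_sign : ∀ n ω, cvSign (S ω) (n + 1) = 1 ∨ cvSign (S ω) (n + 1) = -1 := fun n ω =>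
    cvSign_eq_one_or_neg_one (hξ_sign ω 0) _
  have hlaw : ∀ n v, P {ω | CV (S ω) (n + 1) - CV (S ω) n = v}
      = P {ω | S ω (n + 1 + 1) - S ω (n + 1) = v} := fun n v => by
    simp_rw [CV_succ_sub]
    exact measure_preimage_sign_mul (F.le n) (hε n) (hε_sign n) (hξ _).measurable (hξ_symm _)
      (hξ_indep' n) (measurableSet_singleton v)
  refine ⟨fun ω => by simp [CV], fun ω n => ?_, fun n => ?_, ?_, fun n => by rw [hlaw, hξ_one],
    fun n => by rw [hlaw, hξ_neg_one]⟩
  · rw [CV_succ_sub]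
    rcases hε_sign n ω with h | h <;> rcases hξ_sign ω (n + 1) with h' | h' <;> simp [h, h']
  · unfold CV
    exact Finset.measurable_sum _ fun j _ => ((hε j).mono (F.le j) le_rfl).mul (hξ _).measurable
  · simp_rw [CV_succ_sub]
    exact iIndepFun_sign_mul_of_filtration F hε hε_sign hξ_adapted hξ_symm hξ_indep'

end
end

section
/- Let S be a simple random walk and S̄ = T(S) its Csáki–Vincze transform. Let Y_n = S̄_n - min_{k ≤ n} S̄_k. Then for all n ≥ 0, |Y_n - |S_n|| ≤ 2. -/
open MeasureTheory ProbabilityTheory Filter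

noncomputable section

lemma cvBarX_eq_cvSign_mul (S : ℕ → ℤ) (j : ℕ) : cvBarX S j = cvSign S j * inc S (j + 1) := rfl

lemma cvEll_one (S : ℕ → ℤ) : cvEll S 1 = 0 := by
  simp [cvEll]

lemma cvEll_add_two (S : ℕ → ℤ) (j : ℕ) :
    cvEll S (j + 2) = cvEll S (j + 1) + if S j * S (j + 2) < 0 then 1 else 0 := by
  rw [cvEll, Finset.range_add_one, Finset.filter_insert]
  split_ifs with h h' h'
  · rw [Finset.card_insert_of_notMem (by simp), cvEll]
  · exact absurd h.2 h'
  · exact absurd ⟨j.succ_pos, h'⟩ h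
  · rfl

lemma cvEll_mono (S : ℕ → ℤ) : Monotone (cvEll S) := fun _ _ h =>
  Finset.card_le_card (Finset.filter_subset_filter _ (Finset.range_subset_range.2 h))

lemma cvSign_add_two (S : ℕ → ℤ) (j : ℕ) :
    cvSign S (j + 2) = (if S j * S (j + 2) < 0 then -1 else 1) * cvSign S (j + 1) := by
  rw [cvSign, cvSign, cvEll_add_two, pow_add]
  split_ifs <;> ring

section UnitSteps

variable {a b c : ℤ} (hab : b - a = 1 ∨ b - a = -1) (hbc : c - b = 1 ∨ c - b = -1)
include hab hbc

lemma mul_neg_iff_of_unit_steps : a * c < 0 ↔ b = 0 ∧ c = -a := by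
  constructor
  · intro h
    rcases hab with hab | hab <;> rcases hbc with hbc | hbc <;> constructor <;> nlinarith
  · rintro ⟨rfl, rfl⟩
    rcases hab with hab | hab <;> nlinarith

/-- Flipping `σ` exactly when the path `a, b, c` crosses zero at `b` keeps it the sign of the path. -/
lemma sign_mul_eq_abs_of_unit_steps {σ : ℤ} (ha : σ * a = |a|) (hb : σ * b = |b|) :
    (if a * c < 0 then -1 else 1) * σ * b = |b| ∧
      (if a * c < 0 then -1 else 1) * σ * c = |c| := by
  have hσ : σ = 1 ∨ σ = -1 := by
    refine (abs_eq zero_le_one).1 ?_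
    rcases eq_or_ne b 0 with rfl | hb0
    · exact (mul_eq_right₀ (abs_ne_zero.2 (show a ≠ 0 by omega))).1 (by rw [← abs_mul, ha, abs_abs])
    · exact (mul_eq_right₀ (abs_ne_zero.2 hb0)).1 (by rw [← abs_mul, hb, abs_abs])
  have hcross := mul_neg_iff_of_unit_steps hab hbc
  rcases abs_cases a with ⟨_, _⟩ | ⟨_, _⟩ <;> rcases abs_cases b with ⟨_, _⟩ | ⟨_, _⟩ <;>
    rcases abs_cases c with ⟨_, _⟩ | ⟨_, _⟩ <;> rcases hσ with rfl | rfl <;>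
    split_ifs with h <;> simp only [h, true_iff, false_iff] at hcross <;> omega

end UnitSteps

section UnitStepWalk

variable {S : ℕ → ℤ} (h0 : S 0 = 0) (hpm : ∀ i, S (i + 1) - S i = 1 ∨ S (i + 1) - S i = -1)

include hpm

lemma abs_succ_eq_one_of_eq_zero {i : ℕ} (h : S i = 0) : |S (i + 1)| = 1 := by
  rcases hpm i with h' | h' <;> rw [h, sub_zero] at h' <;> simp [h']

include h0

lemma cvSign_mul_eq_abs (j : ℕ) :
    cvSign S (j + 1) * S j = |S j| ∧ cvSign S (j + 1) * S (j + 1) = |S (j + 1)| := by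
  induction j with
  | zero =>
    have hS1 : cvSign S 1 = S 1 := by simp [cvSign, cvEll_one, inc, h0]
    rw [hS1, h0, mul_zero, abs_zero]
    rcases hpm 0 with h | h <;> rw [h0, sub_zero] at h <;> simp [h]
  | succ j ih =>
    rw [cvSign_add_two]
    exact sign_mul_eq_abs_of_unit_steps (hpm j) (hpm (j + 1)) ih.1 ih.2

lemma cvBarX_add_one (j : ℕ) :
    cvBarX S (j + 1) = |S (j + 2)| - |S (j + 1)| - if S j * S (j + 2) < 0 then 2 else 0 := by
  rw [cvBarX_eq_cvSign_mul, inc, Nat.add_sub_cancel]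
  obtain ⟨-, hb⟩ := cvSign_mul_eq_abs h0 hpm j
  obtain ⟨-, hc⟩ := cvSign_mul_eq_abs h0 hpm (j + 1)
  rw [cvSign_add_two, show j + 1 + 1 = j + 2 from rfl] at hc
  split_ifs at hc ⊢ with h
  · have hz := ((mul_neg_iff_of_unit_steps (hpm j) (hpm (j + 1))).1 h).1
    have hc1 : |S (j + 2)| = 1 := abs_succ_eq_one_of_eq_zero hpm hz
    rw [hc1] at hc
    rw [hz, hc1, abs_zero]
    linarith
  · linear_combination hc - hb

lemma CV_eq_abs_sub_cvEll (n : ℕ) : CV S n = |S (n + 1)| - 1 - 2 * (cvEll S (n + 1) : ℤ) := by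
  induction n with
  | zero => simp [CV, cvEll_one, abs_succ_eq_one_of_eq_zero hpm h0]
  | succ n ih =>
    rw [CV, Finset.sum_range_succ, ← CV, ih, cvBarX_add_one h0 hpm, cvEll_add_two]
    split_ifs <;> push_cast <;> ring

lemma exists_le_CV_le (n : ℕ) : ∃ k ≤ n, CV S k ≤ -2 * (cvEll S (n + 1) : ℤ) := by
  induction n with
  | zero => exact ⟨0, le_rfl, by simp [CV, cvEll_one]⟩
  | succ n ih =>
    by_cases h : S n * S (n + 2) < 0
    · have hz := ((mul_neg_iff_of_unit_steps (hpm n) (hpm (n + 1))).1 h).1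
      refine ⟨n + 1, le_rfl, ?_⟩
      rw [CV_eq_abs_sub_cvEll h0 hpm, abs_succ_eq_one_of_eq_zero hpm hz]
      linarith
    · obtain ⟨k, hkn, hk⟩ := ih
      exact ⟨k, hkn.trans n.le_succ, by rwa [cvEll_add_two, if_neg h, add_zero]⟩

lemma inf'_CV_le (n : ℕ) :
    (Finset.range (n + 1)).inf' Finset.nonempty_range_add_one (CV S) ≤
      -2 * (cvEll S (n + 1) : ℤ) := by
  obtain ⟨k, hkn, hk⟩ := exists_le_CV_le h0 hpm n
  exact (Finset.inf'_le _ (Finset.mem_range_succ_iff.2 hkn)).trans hk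

lemma le_inf'_CV (n : ℕ) :
    -1 - 2 * (cvEll S (n + 1) : ℤ) ≤
      (Finset.range (n + 1)).inf' Finset.nonempty_range_add_one (CV S) := by
  refine Finset.le_inf' _ _ fun k hk => ?_
  have hℓ : cvEll S (k + 1) ≤ cvEll S (n + 1) :=
    cvEll_mono S (Nat.succ_le_succ (Finset.mem_range_succ_iff.1 hk))
  rw [CV_eq_abs_sub_cvEll h0 hpm]
  have := abs_nonneg (S (k + 1))
  omega

end UnitStepWalk

/-- If `Y_n = T(S)_n - min_{k ≤ n} T(S)_k`, then `|Y_n - |S_n|| ≤ 2`. -/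
theorem abs_cv_reflected_sub_abs_le_two (S : ℕ → ℤ) (h0 : S 0 = 0)
    (hpm : ∀ i, S (i + 1) - S i = 1 ∨ S (i + 1) - S i = -1) (n : ℕ) :
    abs (CV S n - (Finset.range (n + 1)).inf' Finset.nonempty_range_add_one (CV S) - abs (S n)) ≤ 2 := by
  have hCV := CV_eq_abs_sub_cvEll h0 hpm n
  have hmin_le := inf'_CV_le h0 hpm n
  have hmin_ge := le_inf'_CV h0 hpm n
  have hstep : |(|S (n + 1)| - |S n|)| ≤ 1 :=
    (abs_abs_sub_abs_le_abs_sub _ _).trans (by rcases hpm n with h | h <;> simp [h])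
  rw [abs_le] at hstep ⊢
  constructor <;> linarith [hstep.1, hstep.2]

end
end

section
/- With the notation of the Csáki–Vincze transform, for every l ≥ 0 and every j with τ_l + 1 ≤ j ≤ τ_{l+1}, one has (-1)^l X_1 = X_{τ_l + 1}, i.e. the sign (-1)^l X_1 equals the common sign of S on the interval [τ_l+1, τ_{l+1}]. Consequently X̄_j = X_{τ_l+1} X_{j+1} for j in that range. -/
open MeasureTheory ProbabilityTheory Filter

noncomputable section

/-!
Pathwise, `τ_{l+1}` is the first zero after `τ_l` at which the walk crosses from one side to the
other. Between two consecutive crossings the walk may touch zero but stays on one side, so the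
step after `τ_{l+1}` is opposite to the step after `τ_l`, whence `X_{τ_l+1} = (-1)^l X_1`; and
`cvEll` counts exactly the crossings `τ_1, …, τ_l` below `j`.

This needs infinitely many crossings (with finitely many, `cvTau` restarts from `sInf ∅ = 0`
and the parity breaks). They exist almost surely because a simple random walk is unbounded in
both directions: conditioning on the first step, which is independent of the shifted walk (again
a simple random walk, hence with the same law), `u_k = P(∃ n, k ≤ S_n)` satisfies
`u_k = (u_{k-1} + u_{k+1}) / 2` for `k ≥ 1`, so `u` is a bounded arithmetic sequence, constant
equal to `u_0 = 1`.
-/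

section Walk

variable {f : ℕ → ℤ}

lemma abs_apply_le (h0 : f 0 = 0) (hstep : ∀ i, f (i + 1) - f i = 1 ∨ f (i + 1) - f i = -1)
    (k : ℕ) : |f k| ≤ k := by
  induction k with
  | zero => simp [h0]
  | succ k ih => have := hstep k; push_cast; rw [abs_le] at ih ⊢; omega

lemma exists_signChange_of_neg_of_pos (hstep : ∀ i, f (i + 1) - f i = 1 ∨ f (i + 1) - f i = -1)
    {a b : ℕ} (hab : a < b) (ha : f a < 0) (hb : 0 < f b) :
    ∃ i, a < i ∧ f (i - 1) * f (i + 1) < 0 := by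
  have hex : ∃ k, a < k ∧ 0 < f k := ⟨b, hab, hb⟩
  obtain ⟨k, ⟨hak, hk⟩, hbefore⟩ :
      ∃ k, (a < k ∧ 0 < f k) ∧ ∀ i, a < i → i < k → f i ≤ 0 :=
    ⟨Nat.find hex, Nat.find_spec hex, fun i hai hik =>
      not_lt.1 fun hi => Nat.find_min hex hik ⟨hai, hi⟩⟩
  obtain ⟨i, rfl⟩ : ∃ i, k = i + 1 := ⟨k - 1, by omega⟩
  have hai : a < i := by
    by_contra h
    obtain rfl : i = a := by omega
    have := hstep i; omega
  have hi0 : f i = 0 := by have := hbefore i hai (by omega); have := hstep i; omega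
  have hprev : f (i - 1) < 0 := by
    obtain ⟨j, rfl⟩ : ∃ j, i = j + 1 := ⟨i - 1, by omega⟩
    have := hstep j
    rcases Nat.lt_or_ge a j with h | h
    · have := hbefore j h (by omega); simp only [Nat.add_sub_cancel]; omega
    · obtain rfl : j = a := by omega
      simpa using ha
  exact ⟨i, hai, mul_neg_of_neg_of_pos hprev hk⟩

lemma exists_signChange_gt (h0 : f 0 = 0)
    (hstep : ∀ i, f (i + 1) - f i = 1 ∨ f (i + 1) - f i = -1)
    (hup : ∀ m : ℤ, ∃ n, m ≤ f n) (hdown : ∀ m : ℤ, ∃ n, f n ≤ m) (N : ℕ) :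
    ∃ i, N < i ∧ f (i - 1) * f (i + 1) < 0 := by
  obtain ⟨a, ha⟩ := hdown (-(N + 1))
  obtain ⟨b, hb⟩ := hup (a + 1)
  have hNa := abs_apply_le h0 hstep a
  have hab := abs_apply_le h0 hstep b
  rw [abs_le] at hNa hab
  obtain ⟨i, hai, hi⟩ := exists_signChange_of_neg_of_pos hstep (a := a) (b := b)
    (by omega) (by omega) (by omega)
  exact ⟨i, by omega, hi⟩

lemma apply_eq_zero_of_signChange (hstep : ∀ i, f (i + 1) - f i = 1 ∨ f (i + 1) - f i = -1)
    {i : ℕ} (hi : 0 < i) (hchg : f (i - 1) * f (i + 1) < 0) :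
    f i = 0 ∧ f (i + 1) = -f (i - 1) := by
  obtain ⟨k, rfl⟩ : ∃ k, i = k + 1 := ⟨i - 1, by omega⟩
  simp only [Nat.add_sub_cancel, mul_neg_iff] at hchg ⊢
  have := hstep k
  have := hstep (k + 1)
  omega

lemma apply_succ_eq_of_not_signChange
    (hstep : ∀ i, f (i + 1) - f i = 1 ∨ f (i + 1) - f i = -1)
    {i : ℕ} (hi : 0 < i) (hz : f i = 0) (hnchg : ¬ f (i - 1) * f (i + 1) < 0) :
    f (i + 1) = f (i - 1) := by
  obtain ⟨k, rfl⟩ : ∃ k, i = k + 1 := ⟨i - 1, by omega⟩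
  simp only [Nat.add_sub_cancel, not_lt, mul_nonneg_iff] at hnchg ⊢
  have := hstep k
  have := hstep (k + 1)
  omega

lemma mul_nonneg_of_forall_not_signChange
    (hstep : ∀ i, f (i + 1) - f i = 1 ∨ f (i + 1) - f i = -1) {a b : ℕ} (ha : f a = 0)
    (hnchg : ∀ i, a < i → i < b → ¬ f (i - 1) * f (i + 1) < 0)
    {i : ℕ} (hai : a ≤ i) (hib : i ≤ b) : 0 ≤ f (a + 1) * f i := by
  induction i using Nat.strong_induction_on with
  | _ i ih =>
  obtain rfl | rfl | hi : i = a ∨ i = a + 1 ∨ a + 2 ≤ i := by omega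
  · simp [ha]
  · exact mul_self_nonneg _
  · obtain ⟨k, rfl⟩ : ∃ k, i = k + 1 + 1 := ⟨i - 2, by omega⟩
    have hk := ih k (by omega) (by omega) (by omega)
    by_cases hz : f (k + 1) = 0
    · rwa [apply_succ_eq_of_not_signChange hstep (by omega) hz
        (hnchg (k + 1) (by omega) (by omega))]
    · have hk1 := ih (k + 1) (by omega) (by omega) (by omega)
      have := hstep a
      have := hstep (k + 1)
      rcases (show f (a + 1) = 1 ∨ f (a + 1) = -1 by omega) with hs | hs <;>
        simp only [hs, one_mul, neg_one_mul, neg_nonneg] at hk1 ⊢ <;> omega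

lemma cvTau_lt_succ_and_signChange (hchg : ∀ N, ∃ i, N < i ∧ f (i - 1) * f (i + 1) < 0)
    (l : ℕ) :
    cvTau f l < cvTau f (l + 1) ∧ f (cvTau f (l + 1) - 1) * f (cvTau f (l + 1) + 1) < 0 :=
  Nat.sInf_mem (hchg (cvTau f l))

lemma not_signChange_of_lt_cvTau_succ (l : ℕ) {i : ℕ} (hl : cvTau f l < i)
    (hi : i < cvTau f (l + 1)) : ¬ f (i - 1) * f (i + 1) < 0 :=
  fun h => Nat.notMem_of_lt_sInf hi ⟨hl, h⟩

lemma apply_cvTau_eq_zero (h0 : f 0 = 0)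
    (hstep : ∀ i, f (i + 1) - f i = 1 ∨ f (i + 1) - f i = -1)
    (hchg : ∀ N, ∃ i, N < i ∧ f (i - 1) * f (i + 1) < 0) : ∀ l, f (cvTau f l) = 0
  | 0 => h0
  | l + 1 =>
    have ⟨hlt, h⟩ := cvTau_lt_succ_and_signChange hchg l
    (apply_eq_zero_of_signChange hstep (by omega) h).1

lemma inc_succ_eq_neg_of_signChange (hstep : ∀ i, f (i + 1) - f i = 1 ∨ f (i + 1) - f i = -1)
    {a b : ℕ} (hab : a < b) (ha : f a = 0) (hb : f (b - 1) * f (b + 1) < 0)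
    (hnchg : ∀ i, a < i → i < b → ¬ f (i - 1) * f (i + 1) < 0) :
    inc f (b + 1) = -inc f (a + 1) := by
  obtain ⟨hb0, hb1⟩ := apply_eq_zero_of_signChange hstep (by omega) hb
  have hsame : 0 ≤ f (a + 1) * f (b - 1) :=
    mul_nonneg_of_forall_not_signChange hstep ha hnchg (by omega) (by omega)
  have hsa := hstep a
  have hsb := hstep (b - 1)
  rw [Nat.sub_add_cancel (by omega)] at hsb
  simp only [inc, Nat.add_sub_cancel, ha, hb0, hb1, sub_zero]
  rcases (show f (a + 1) = 1 ∨ f (a + 1) = -1 by omega) with hs | hs <;>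
    simp only [hs, one_mul, neg_one_mul, neg_nonneg] at hsame ⊢ <;> omega

lemma inc_cvTau_succ_add_one (h0 : f 0 = 0)
    (hstep : ∀ i, f (i + 1) - f i = 1 ∨ f (i + 1) - f i = -1)
    (hchg : ∀ N, ∃ i, N < i ∧ f (i - 1) * f (i + 1) < 0) (l : ℕ) :
    inc f (cvTau f (l + 1) + 1) = -inc f (cvTau f l + 1) :=
  have ⟨hlt, h⟩ := cvTau_lt_succ_and_signChange hchg l
  inc_succ_eq_neg_of_signChange hstep hlt (apply_cvTau_eq_zero h0 hstep hchg l) h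
    fun _ => not_signChange_of_lt_cvTau_succ l

lemma inc_cvTau_add_one (h0 : f 0 = 0)
    (hstep : ∀ i, f (i + 1) - f i = 1 ∨ f (i + 1) - f i = -1)
    (hchg : ∀ N, ∃ i, N < i ∧ f (i - 1) * f (i + 1) < 0) :
    ∀ l, inc f (cvTau f l + 1) = (-1) ^ l * inc f 1
  | 0 => by simp [cvTau]
  | l + 1 => by
    rw [inc_cvTau_succ_add_one h0 hstep hchg, inc_cvTau_add_one h0 hstep hchg l, pow_succ]
    ring

lemma cvEll_succ (j : ℕ) :
    cvEll f (j + 1) = cvEll f j + if 0 < j ∧ f (j - 1) * f (j + 1) < 0 then 1 else 0 := by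
  simp only [cvEll, Finset.range_add_one, Finset.filter_insert]
  split_ifs with h
  · rw [Finset.card_insert_of_notMem (by simp)]
  · rfl

lemma cvEll_eq_of_forall_not_signChange {a b : ℕ}
    (hab : ∀ i, a < i → i < b → ¬ f (i - 1) * f (i + 1) < 0) {j : ℕ} (haj : a + 1 ≤ j)
    (hjb : j ≤ b) : cvEll f j = cvEll f (a + 1) := by
  induction j, haj using Nat.le_induction with
  | base => rfl
  | succ j hj ih => rw [cvEll_succ, ih (by omega), if_neg fun h => hab j (by omega) (by omega) h.2,
      add_zero]

lemma cvEll_cvTau_add_one (hchg : ∀ N, ∃ i, N < i ∧ f (i - 1) * f (i + 1) < 0) :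
    ∀ l, cvEll f (cvTau f l + 1) = l
  | 0 => by simp [cvEll, cvTau]
  | l + 1 => by
    obtain ⟨hlt, h⟩ := cvTau_lt_succ_and_signChange hchg l
    rw [cvEll_succ, if_pos ⟨by omega, h⟩, cvEll_eq_of_forall_not_signChange
      (fun i => not_signChange_of_lt_cvTau_succ l) hlt le_rfl, cvEll_cvTau_add_one hchg l]

lemma cvEll_eq_of_mem_Icc (hchg : ∀ N, ∃ i, N < i ∧ f (i - 1) * f (i + 1) < 0) {l j : ℕ}
    (hlj : cvTau f l + 1 ≤ j) (hjl : j ≤ cvTau f (l + 1)) : cvEll f j = l := by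
  rw [cvEll_eq_of_forall_not_signChange (fun i => not_signChange_of_lt_cvTau_succ l) hlj hjl,
    cvEll_cvTau_add_one hchg]

end Walk

def partialSum (x : ℕ → ℤ) (n : ℕ) : ℤ := ∑ i ∈ Finset.range n, x i

lemma measurable_partialSum : Measurable partialSum :=
  measurable_pi_lambda _ fun _ => Finset.measurable_sum _ fun i _ => measurable_pi_apply i

lemma partialSum_sub (f : ℕ → ℤ) :
    partialSum (fun i => f (i + 1) - f i) = fun n => f n - f 0 :=
  funext fun _ => Finset.sum_range_sub f _

lemma ProbabilityTheory.iIndepFun.indepFun_zero_succ {Ω β : Type*} [MeasurableSpace Ω]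
    [MeasurableSpace β] {P : Measure Ω} {X : ℕ → Ω → β} (hXm : ∀ i, Measurable (X i))
    (hind : iIndepFun X P) :
    IndepFun (X 0) (fun ω i => X (i + 1) ω) P := by
  have h := indep_iSup_of_disjoint (fun i => (hXm i).comap_le)
    ((iIndepFun_iff_iIndep _ _ _).1 hind) (S := {0}) (T := Set.Ioi 0) (by simp)
  have htail : MeasurableSpace.comap (fun ω i => X (i + 1) ω) MeasurableSpace.pi ≤
      ⨆ i ∈ Set.Ioi 0, MeasurableSpace.comap (X i) inferInstance := by
    simp_rw [MeasurableSpace.pi, MeasurableSpace.comap_iSup, MeasurableSpace.comap_comp]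
    exact iSup_le fun i => le_iSup₂_of_le (f := fun i (_ : i ∈ Set.Ioi 0) => _) (i + 1)
      i.succ_pos le_rfl
  exact indep_of_indep_of_le_right (indep_of_indep_of_le_left h (by simp)) htail

lemma eq_apply_zero_of_arith_of_abs_le {u : ℕ → ℝ} {C : ℝ}
    (hu : ∀ k, u (k + 2) - u (k + 1) = u (k + 1) - u k) (hC : ∀ k, |u k| ≤ C) (k : ℕ) :
    u k = u 0 := by
  have hstep : ∀ k, u (k + 1) - u k = u 1 - u 0 := by
    intro k; induction k with
    | zero => rfl
    | succ k ih => rw [hu, ih]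
  have hlin : ∀ k : ℕ, u k - u 0 = k * (u 1 - u 0) := by
    intro k; induction k with
    | zero => simp
    | succ k ih => push_cast; linarith [hstep k]
  suffices hd : u 1 - u 0 = 0 by
    have := hlin k
    rw [hd, mul_zero] at this
    linarith
  by_contra hd
  obtain ⟨n, hn⟩ := exists_nat_gt (2 * C / |u 1 - u 0|)
  have h1 : 2 * C < n * |u 1 - u 0| := (div_lt_iff₀ (abs_pos.2 hd)).1 hn
  have h2 : |u n - u 0| ≤ 2 * C := (abs_sub _ _).trans (by linarith [hC n, hC 0])
  rw [hlin, abs_mul, Nat.abs_cast] at h2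
  linarith

lemma map_eq_map_of_pm_one {Ω Ω' : Type*} [MeasurableSpace Ω] [MeasurableSpace Ω']
    {P : Measure Ω} {Q : Measure Ω'}
    {X : Ω → ℤ} {Y : Ω' → ℤ} (hX : Measurable X) (hY : Measurable Y)
    (hXpm : ∀ ω, X ω = 1 ∨ X ω = -1) (hYpm : ∀ ω, Y ω = 1 ∨ Y ω = -1)
    (hX1 : P {ω | X ω = 1} = 1 / 2) (hX2 : P {ω | X ω = -1} = 1 / 2)
    (hY1 : Q {ω | Y ω = 1} = 1 / 2) (hY2 : Q {ω | Y ω = -1} = 1 / 2) :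
    P.map X = Q.map Y := by
  refine Measure.ext_of_singleton fun k => ?_
  rw [Measure.map_apply hX (measurableSet_singleton k),
    Measure.map_apply hY (measurableSet_singleton k)]
  by_cases h1 : k = 1
  · subst h1; exact hX1.trans hY1.symm
  by_cases h2 : k = -1
  · subst h2; exact hX2.trans hY2.symm
  have hXk : X ⁻¹' {k} = ∅ := by
    ext ω; rcases hXpm ω with h | h <;> simp [h, Ne.symm h1, Ne.symm h2]
  have hYk : Y ⁻¹' {k} = ∅ := by
    ext ω; rcases hYpm ω with h | h <;> simp [h, Ne.symm h1, Ne.symm h2]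
  rw [hXk, hYk, measure_empty, measure_empty]

def walkShift {Ω : Type*} (S : Ω → ℕ → ℤ) (ω : Ω) (n : ℕ) : ℤ :=
  S ω (n + 1) - S ω 1

def reaches (j : ℤ) : Set (ℕ → ℤ) := {s | ∃ n, j ≤ s n}

lemma measurableSet_reaches (j : ℤ) : MeasurableSet (reaches j) := by
  simp only [reaches, Set.ofPred_exists]
  exact MeasurableSet.iUnion fun n => measurableSet_le measurable_const (measurable_pi_apply n)

namespace IsSRW

variable {Ω : Type*} [MeasurableSpace Ω] {P : Measure Ω} {S : Ω → ℕ → ℤ}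

lemma apply_zero (hS : IsSRW P S) (ω : Ω) : S ω 0 = 0 := hS.1 ω

lemma step (hS : IsSRW P S) (ω : Ω) (i : ℕ) :
    S ω (i + 1) - S ω i = 1 ∨ S ω (i + 1) - S ω i = -1 :=
  hS.2.1 ω i

lemma measurable_apply (hS : IsSRW P S) (i : ℕ) : Measurable fun ω => S ω i := hS.2.2.1 i

lemma iIndepFun_incr (hS : IsSRW P S) : iIndepFun (fun i ω => S ω (i + 1) - S ω i) P :=
  hS.2.2.2.1

lemma measure_incr_eq_one (hS : IsSRW P S) (i : ℕ) :
    P {ω | S ω (i + 1) - S ω i = 1} = 1 / 2 :=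
  hS.2.2.2.2.1 i

lemma measure_incr_eq_neg_one (hS : IsSRW P S) (i : ℕ) :
    P {ω | S ω (i + 1) - S ω i = -1} = 1 / 2 :=
  hS.2.2.2.2.2 i

lemma measurable (hS : IsSRW P S) : Measurable S := measurable_pi_lambda _ hS.measurable_apply

lemma measurable_incr (hS : IsSRW P S) (i : ℕ) : Measurable fun ω => S ω (i + 1) - S ω i :=
  (hS.measurable_apply (i + 1)).sub (hS.measurable_apply i)

lemma eq_partialSum (hS : IsSRW P S) : S = partialSum ∘ fun ω i => S ω (i + 1) - S ω i :=
  funext fun ω => by simp [partialSum_sub, hS.apply_zero ω]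

lemma map_eq [IsProbabilityMeasure P] {Ω' : Type*} [MeasurableSpace Ω'] {Q : Measure Ω'}
    [IsProbabilityMeasure Q] {T : Ω' → ℕ → ℤ} (hS : IsSRW P S) (hT : IsSRW Q T) :
    P.map S = Q.map T := by
  rw [hS.eq_partialSum, hT.eq_partialSum,
    ← Measure.map_map measurable_partialSum (measurable_pi_lambda _ hS.measurable_incr),
    ← Measure.map_map measurable_partialSum (measurable_pi_lambda _ hT.measurable_incr),
    hS.iIndepFun_incr.map_fun_eq_infinitePi_map hS.measurable_incr,
    hT.iIndepFun_incr.map_fun_eq_infinitePi_map hT.measurable_incr]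
  congr 2
  funext i
  exact map_eq_map_of_pm_one (hS.measurable_incr i) (hT.measurable_incr i) (hS.step · i)
    (hT.step · i) (hS.measure_incr_eq_one i) (hS.measure_incr_eq_neg_one i)
    (hT.measure_incr_eq_one i) (hT.measure_incr_eq_neg_one i)

lemma shift (hS : IsSRW P S) : IsSRW P (walkShift S) := by
  obtain ⟨h0, hpm, hm, hind, h1, h2⟩ := hS
  refine ⟨fun ω => sub_self _, fun ω i => ?_, fun i => (hm _).sub (hm 1), ?_, fun i => ?_,
    fun i => ?_⟩ <;> simp only [walkShift, sub_sub_sub_cancel_right]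
  · exact hpm ω (i + 1)
  · exact hind.precomp (add_left_injective 1)
  · exact h1 (i + 1)
  · exact h2 (i + 1)

lemma neg (hS : IsSRW P S) : IsSRW P fun ω n => -S ω n := by
  obtain ⟨h0, hpm, hm, hind, h1, h2⟩ := hS
  have hincr : (fun i ω => -S ω (i + 1) - -S ω i) = fun i ω => -(S ω (i + 1) - S ω i) := by
    funext i ω; ring
  refine ⟨fun ω => by simp [h0], fun ω i => ?_, fun i => (hm i).neg, ?_, fun i => ?_,
    fun i => ?_⟩
  · rcases hpm ω i with h | h <;> [right; left] <;> linarith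
  · rw [hincr]; exact hind.comp (fun _ => Neg.neg) fun _ => measurable_neg
  · convert h2 i using 2; ext ω; simp only [Set.mem_ofPred_eq]; omega
  · convert h1 i using 2; ext ω; simp only [Set.mem_ofPred_eq]; omega

lemma indepFun_one_walkShift (hS : IsSRW P S) : IndepFun (fun ω => S ω 1) (walkShift S) P := by
  have h := hS.iIndepFun_incr.indepFun_zero_succ hS.measurable_incr
  have hshift : walkShift S = partialSum ∘ fun ω i => S ω (i + 1 + 1) - S ω (i + 1) :=
    funext fun ω => (partialSum_sub fun n => S ω (n + 1)).symm
  simp only [zero_add, hS.apply_zero, sub_zero] at h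
  rw [hshift]
  exact h.comp measurable_id measurable_partialSum

lemma preimage_reaches_eq (hS : IsSRW P S) {j : ℤ} (hj : 0 < j) :
    S ⁻¹' reaches j =
      ((fun ω => S ω 1) ⁻¹' {1} ∩ walkShift S ⁻¹' reaches (j - 1)) ∪
      ((fun ω => S ω 1) ⁻¹' {-1} ∩ walkShift S ⁻¹' reaches (j + 1)) := by
  ext ω
  have h1 := hS.step ω 0
  simp only [zero_add, hS.apply_zero ω, sub_zero] at h1
  simp only [reaches, walkShift, Set.mem_preimage, Set.mem_union, Set.mem_inter_iff,
    Set.mem_singleton_iff, Set.mem_ofPred_eq]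
  constructor
  · rintro ⟨_ | n, hn⟩
    · rw [hS.apply_zero ω] at hn; omega
    · rcases h1 with h1 | h1 <;> [left; right] <;> exact ⟨h1, n, by omega⟩
  · rintro (⟨h1, n, hn⟩ | ⟨h1, n, hn⟩) <;> exact ⟨n + 1, by omega⟩

lemma measure_preimage_reaches [IsProbabilityMeasure P] (hS : IsSRW P S) {j : ℤ} (hj : 0 < j) :
    P (S ⁻¹' reaches j) =
      1 / 2 * P (S ⁻¹' reaches (j - 1)) + 1 / 2 * P (S ⁻¹' reaches (j + 1)) := by
  have hshift_law : ∀ k, P (walkShift S ⁻¹' reaches k) = P (S ⁻¹' reaches k) := fun k => by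
    rw [← Measure.map_apply hS.shift.measurable (measurableSet_reaches k),
      ← Measure.map_apply hS.measurable (measurableSet_reaches k), hS.shift.map_eq hS]
  have hfirst : ∀ e k, P ((fun ω => S ω 1) ⁻¹' {e} ∩ walkShift S ⁻¹' reaches k) =
      P {ω | S ω (0 + 1) - S ω 0 = e} * P (S ⁻¹' reaches k) := fun e k => by
    rw [hS.indepFun_one_walkShift.measure_inter_preimage_eq_mul _ _ (measurableSet_singleton e)
      (measurableSet_reaches k), hshift_law]
    simp only [zero_add, hS.apply_zero, sub_zero]
    rfl
  have hdisj : Disjoint ((fun ω => S ω 1) ⁻¹' {1}) ((fun ω => S ω 1) ⁻¹' {-1}) :=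
    Disjoint.preimage _ (by simp)
  rw [hS.preimage_reaches_eq hj,
    measure_union (hdisj.mono Set.inter_subset_left Set.inter_subset_left)
      ((hS.measurable_apply 1 (measurableSet_singleton _)).inter
        (hS.shift.measurable (measurableSet_reaches _))),
    hfirst, hfirst, hS.measure_incr_eq_one, hS.measure_incr_eq_neg_one]

lemma measure_preimage_reaches_natCast [IsProbabilityMeasure P] (hS : IsSRW P S) (k : ℕ) :
    P (S ⁻¹' reaches k) = 1 := by
  set u : ℕ → ℝ := fun k => P.real (S ⁻¹' reaches k)
  have hu0 : u 0 = 1 := by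
    have : S ⁻¹' reaches 0 = Set.univ :=
      Set.eq_univ_of_forall fun ω => ⟨0, by simp [hS.apply_zero ω]⟩
    simp [u, this]
  have hmid : ∀ k, u (k + 2) - u (k + 1) = u (k + 1) - u k := fun k => by
    have h := hS.measure_preimage_reaches (j := (k + 1 : ℕ)) (by omega)
    rw [show ((k + 1 : ℕ) : ℤ) - 1 = k by push_cast; ring,
      show ((k + 1 : ℕ) : ℤ) + 1 = (k + 2 : ℕ) by push_cast; ring] at h
    have h' := congrArg ENNReal.toReal h
    rw [ENNReal.toReal_add (by finiteness) (by finiteness), ENNReal.toReal_mul,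
      ENNReal.toReal_mul] at h'
    simp only [u, measureReal_def]
    norm_num at h'
    push_cast
    linarith
  have hk : u k = 1 := (eq_apply_zero_of_arith_of_abs_le hmid
    (fun k => abs_le.2 ⟨by linarith [measureReal_nonneg (μ := P) (s := S ⁻¹' reaches k)],
      measureReal_le_one⟩) k).trans hu0
  change P.real _ = 1 at hk
  rwa [measureReal_def, ENNReal.toReal_eq_one_iff] at hk

lemma ae_exists_le [IsProbabilityMeasure P] (hS : IsSRW P S) :
    ∀ᵐ ω ∂P, ∀ m : ℤ, ∃ n, m ≤ S ω n := by
  have h : ∀ k : ℕ, ∀ᵐ ω ∂P, ω ∈ S ⁻¹' reaches k := fun k =>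
    (ae_iff_measure_eq (hS.measurable (measurableSet_reaches k)).nullMeasurableSet).2
      (by rw [measure_univ]; exact hS.measure_preimage_reaches_natCast k)
  filter_upwards [ae_all_iff.2 h] with ω hω m
  obtain ⟨n, hn⟩ := hω m.toNat
  exact ⟨n, (Int.self_le_toNat m).trans hn⟩

end IsSRW

/-- For `τ_l + 1 ≤ j ≤ τ_{l+1}` one has `(-1)^l X_1 = X_{τ_l+1}`,
and consequently `X̄_j = X_{τ_l+1} X_{j+1}`; almost surely for a simple random walk. -/
theorem cv_sign_eq_inc_tau {Ω : Type*} [MeasurableSpace Ω] (P : Measure Ω)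
    [IsProbabilityMeasure P] (S : Ω → ℕ → ℤ) (hS : IsSRW P S) :
    ∀ᵐ ω ∂P, ∀ l j : ℕ, cvTau (S ω) l + 1 ≤ j → j ≤ cvTau (S ω) (l + 1) →
      (-1) ^ l * inc (S ω) 1 = inc (S ω) (cvTau (S ω) l + 1) ∧
      cvBarX (S ω) j = inc (S ω) (cvTau (S ω) l + 1) * inc (S ω) (j + 1) := by
  filter_upwards [hS.ae_exists_le, hS.neg.ae_exists_le] with ω hup hdown
  have hchg := exists_signChange_gt (hS.apply_zero ω) (hS.step ω) hup fun m => by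
    obtain ⟨n, hn⟩ := hdown (-m)
    exact ⟨n, by omega⟩
  intro l j hlj hjl
  have hsign := inc_cvTau_add_one (hS.apply_zero ω) (hS.step ω) hchg l
  exact ⟨hsign.symm, by rw [cvBarX, cvEll_eq_of_mem_Icc hchg hlj hjl, hsign]⟩

end
end

section
/- For a simple random walk S, the first increment S_1 is independent of the σ-field σ(T(S)) generated by the whole Csáki–Vincze transform T(S). -/
open MeasureTheory ProbabilityTheory Filter

noncomputable section

/-! The Csáki–Vincze transform is invariant under `S ↦ -S`, so `T(S) = T(S₁ • S)`, and the
normalised walk `S₁ • S` is determined by the products `Z_k = X₁ X_{k+2}` alone. Given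
`X₁ = a` we have `Z = a • (X_{k+2})_k`; the tail `(X_{k+2})_k` is independent of `X₁` and its
law is invariant under a global sign flip, so the conditional law of `Z` does not depend on
`a`. Hence `S₁ = X₁` is independent of `Z`, and a fortiori of `σ(T(S))`. -/

theorem DependsOn.measurable_of_finite {ι α β : Type*} [Countable α] [MeasurableSpace α]
    [MeasurableSingletonClass α] [MeasurableSpace β] [Nonempty β] {f : (ι → α) → β}
    {s : Set ι} (hs : s.Finite) (hf : DependsOn f s) : Measurable f := by
  have := hs.to_subtype
  obtain ⟨g, rfl⟩ := dependsOn_iff_exists_comp.mp hf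
  exact (measurable_of_countable g).comp (Set.measurable_restrict s)

theorem MeasureTheory.measure_preimage_inter_eq_tsum {Ω β : Type*} [MeasurableSpace Ω]
    {P : Measure Ω} [MeasurableSpace β] [MeasurableSingletonClass β] [Countable β] {f : Ω → β}
    (hf : Measurable f) (s : Set β) (A : Set Ω) : P (f ⁻¹' s ∩ A) = ∑' b : s, P (f ⁻¹' {(b : β)} ∩ A) := by
  have hfib : ∀ b ∈ s, MeasurableSet (f ⁻¹' {b}) := fun b _ => hf (measurableSet_singleton b)
  rw [← Measure.restrict_apply (hf s.to_countable.measurableSet),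
    ← tsum_measure_preimage_singleton s.to_countable hfib]
  exact tsum_congr fun b => Measure.restrict_apply (hfib b b.2)

namespace ProbabilityTheory

variable {Ω : Type*} [MeasurableSpace Ω] {P : Measure Ω}

theorem IndepFun.indepFun_smul_of_identDistrib {M E : Type*} [MeasurableSpace M]
    [MeasurableSingletonClass M] [Countable M] [MeasurableSpace E] [SMul M E]
    [MeasurableConstSMul M E] [IsProbabilityMeasure P] {ε : Ω → M} {Y : Ω → E}
    (hε : Measurable ε) (hind : IndepFun ε Y P)
    (hinv : ∀ a ∈ Set.range ε, IdentDistrib (fun ω => a • Y ω) Y P P) :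
    IndepFun ε (fun ω => ε ω • Y ω) P := by
  rw [indepFun_iff_measure_inter_preimage_eq_mul]
  intro s B _ hB
  have hfiber (a : M) :
      P (ε ⁻¹' {a} ∩ (fun ω => ε ω • Y ω) ⁻¹' B) = P (ε ⁻¹' {a}) * P (Y ⁻¹' B) := by
    by_cases ha : a ∈ Set.range ε
    · have hset : ε ⁻¹' {a} ∩ (fun ω => ε ω • Y ω) ⁻¹' B
          = ε ⁻¹' {a} ∩ Y ⁻¹' ((a • ·) ⁻¹' B) := by
        ext ω
        simp only [Set.mem_inter_iff, Set.mem_preimage, Set.mem_singleton_iff]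
        constructor <;> rintro ⟨rfl, h⟩ <;> exact ⟨rfl, h⟩
      rw [hset, hind.measure_inter_preimage_eq_mul _ _ (measurableSet_singleton a)
        (measurable_const_smul a hB)]
      exact congrArg _ ((hinv a ha).measure_mem_eq hB)
    · have : ε ⁻¹' {a} = ∅ := Set.preimage_eq_empty (by simpa using ha)
      simp [this]
  have hsum (t : Set M) :
      P (ε ⁻¹' t ∩ (fun ω => ε ω • Y ω) ⁻¹' B) = P (ε ⁻¹' t) * P (Y ⁻¹' B) := by
    rw [measure_preimage_inter_eq_tsum hε, ← Set.inter_univ (ε ⁻¹' t),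
      measure_preimage_inter_eq_tsum hε, ← ENNReal.tsum_mul_right]
    simp only [Set.inter_univ, hfiber]
  have hmarg : P ((fun ω => ε ω • Y ω) ⁻¹' B) = P (Y ⁻¹' B) := by
    simpa using hsum Set.univ
  rw [hsum, hmarg]

theorem iIndepFun.indepFun_head_tail {β : Type*} [MeasurableSpace β] {X : ℕ → Ω → β}
    (hX : ∀ i, Measurable (X i)) (h : iIndepFun X P) :
    IndepFun (X 0) (fun ω k => X (k + 1) ω) P := by
  let σX (T : Set ℕ) := ⨆ i ∈ T, MeasurableSpace.comap (X i) ‹_›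
  have hsplit : Indep (σX {0}) (σX (Set.Ioi 0)) P :=
    indep_iSup_of_disjoint (fun i => (hX i).comap_le) h.iIndep (by simp)
  have hhead : MeasurableSpace.comap (X 0) ‹_› ≤ σX {0} :=
    le_biSup (fun i => MeasurableSpace.comap (X i) _) rfl
  have htail : MeasurableSpace.comap (fun ω k => X (k + 1) ω) MeasurableSpace.pi
      ≤ σX (Set.Ioi 0) := by
    simp only [MeasurableSpace.pi, MeasurableSpace.comap_iSup, MeasurableSpace.comap_comp]
    exact iSup_le fun k => le_biSup (fun i => MeasurableSpace.comap (X i) _) k.succ_pos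
  rw [IndepFun_iff_Indep]
  exact indep_of_indep_of_le_right (indep_of_indep_of_le_left hsplit hhead) htail

theorem identDistrib_neg_of_measure_eq {X : Ω → ℤ} (hX : Measurable X)
    (hpm : ∀ ω, X ω = 1 ∨ X ω = -1) (h : P (X ⁻¹' {1}) = P (X ⁻¹' {-1})) :
    IdentDistrib (fun ω => -X ω) X P P where
  aemeasurable_fst := hX.neg.aemeasurable
  aemeasurable_snd := hX.aemeasurable
  map_eq := by
    refine Measure.ext_of_singleton fun c => ?_
    rw [Measure.map_apply (f := fun ω => -X ω) hX.neg (measurableSet_singleton c),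
      Measure.map_apply hX (measurableSet_singleton c)]
    show P (X ⁻¹' (Neg.neg ⁻¹' {c})) = _
    rw [show Neg.neg ⁻¹' {c} = {-c} by ext; simp]
    by_cases hc : c = 1 ∨ c = -1
    · rcases hc with rfl | rfl
      · exact h.symm
      · simpa using h
    · have hempty (d : ℤ) (hd : d ≠ 1 ∧ d ≠ -1) : X ⁻¹' {d} = ∅ :=
        Set.eq_empty_of_forall_notMem fun ω hω => by rcases hpm ω with h | h <;> simp_all
      rw [hempty c (by omega), hempty (-c) (by omega)]

theorem iIndepFun.identDistrib_sign_smul {ι : Type*} [Countable ι] {X : ι → Ω → ℤ}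
    (hind : iIndepFun X P) (hX : ∀ i, Measurable (X i)) (hpm : ∀ ω i, X i ω = 1 ∨ X i ω = -1)
    (hsymm : ∀ i, P (X i ⁻¹' {1}) = P (X i ⁻¹' {-1})) {a : ℤ} (ha : a = 1 ∨ a = -1) :
    IdentDistrib (fun ω => a • fun i => X i ω) (fun ω i => X i ω) P P := by
  rcases ha with rfl | rfl
  · simpa only [one_smul] using IdentDistrib.refl (measurable_pi_lambda _ hX).aemeasurable
  · simp only [neg_one_smul]
    exact IdentDistrib.pi (fun i => identDistrib_neg_of_measure_eq (hX i) (hpm · i) (hsymm i))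
      (hind.comp _ fun _ => measurable_neg) hind

end ProbabilityTheory

theorem CV_neg (s : ℕ → ℤ) : CV (-s) = CV s := by
  funext n
  simp only [CV, cvBarX, cvEll, inc, Pi.neg_apply, neg_mul_neg]
  exact Finset.sum_congr rfl fun j _ => by ring

theorem dependsOn_CV (n : ℕ) : DependsOn (fun s => CV s n) (Set.Iio (n + 2)) := by
  intro s t h
  simp only [Set.mem_Iio] at h
  have hEll (j : ℕ) (hj : j ≤ n) : cvEll s j = cvEll t j := by
    unfold cvEll
    congr 1
    refine Finset.filter_congr fun i hi => ?_
    rw [Finset.mem_range] at hi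
    rw [h (i - 1) (by omega), h (i + 1) (by omega)]
  refine Finset.sum_congr rfl fun j hj => ?_
  rw [Finset.mem_range] at hj
  simp only [cvBarX, inc, Nat.add_one_sub_one, hEll (j + 1) (by omega),
    h 0 (by omega), h 1 (by omega), h (j + 1) (by omega), h (j + 1 + 1) (by omega)]

theorem measurable_CV (n : ℕ) : Measurable (fun s : ℕ → ℤ => CV s n) :=
  (dependsOn_CV n).measurable_of_finite (Set.finite_Iio _)

def upStartWalk (z : ℕ → ℤ) : ℕ → ℤ
  | 0 => 0
  | n + 1 => 1 + ∑ k ∈ Finset.range n, z k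

theorem measurable_upStartWalk : Measurable upStartWalk := by
  refine measurable_pi_lambda _ fun n => ?_
  cases n with
  | zero => exact measurable_const
  | succ n => exact measurable_const.add (Finset.measurable_sum _ fun k _ => measurable_pi_apply k)

theorem mul_first_eq_upStartWalk {s : ℕ → ℤ} (h0 : s 0 = 0) (h1 : s 1 * s 1 = 1) :
    (fun i => s 1 * s i) = upStartWalk (fun k => s 1 * (s (k + 2) - s (k + 1))) := by
  funext i
  cases i with
  | zero => simp [upStartWalk, h0]
  | succ n =>
    induction n with
    | zero => simp [upStartWalk, h1]
    | succ n ih =>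
      simp only [upStartWalk, Finset.sum_range_succ] at ih ⊢
      linear_combination ih

theorem CV_eq_CV_upStartWalk {s : ℕ → ℤ} (h0 : s 0 = 0) (h1 : s 1 = 1 ∨ s 1 = -1) :
    CV s = CV (upStartWalk (fun k => s 1 * (s (k + 2) - s (k + 1)))) := by
  rw [← mul_first_eq_upStartWalk h0 (by rcases h1 with h | h <;> simp [h])]
  rcases h1 with h | h
  · simp [h]
  · simp only [h, neg_one_mul]
    exact (CV_neg s).symm

/-- `S_1` is independent of `σ(T(S))`. -/
theorem cv_first_step_indep {Ω : Type*} [MeasurableSpace Ω] (P : Measure Ω)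
    [IsProbabilityMeasure P] (S : Ω → ℕ → ℤ) (hS : IsSRW P S) :
    Indep (MeasurableSpace.comap (fun ω => S ω 1) inferInstance)
      (⨆ j : ℕ, MeasurableSpace.comap (fun ω => CV (S ω) j) inferInstance) P := by
  obtain ⟨h0, hpm, hmeas, hind, hup, hdown⟩ := hS
  set X : ℕ → Ω → ℤ := fun i ω => S ω (i + 1) - S ω i with hX
  have hXm (i : ℕ) : Measurable (X i) := (hmeas (i + 1)).sub (hmeas i)
  have hinv : ∀ a ∈ Set.range (X 0),
      IdentDistrib (fun ω => a • fun k => X (k + 1) ω) (fun ω k => X (k + 1) ω) P P := by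
    rintro _ ⟨ω, rfl⟩
    exact (hind.precomp Nat.succ_injective).identDistrib_sign_smul (fun k => hXm (k + 1))
      (fun ω k => hpm ω (k + 1)) (fun k => (hup _).trans (hdown _).symm) (hpm ω 0)
  let Z (ω : Ω) : ℕ → ℤ := X 0 ω • fun k => X (k + 1) ω
  have hflip : IndepFun (X 0) Z P :=
    (hind.indepFun_head_tail hXm).indepFun_smul_of_identDistrib (hXm 0) hinv
  have hfactor (j : ℕ) : (fun ω => CV (S ω) j) = (fun z => CV (upStartWalk z) j) ∘ Z := by
    funext ω
    rw [Function.comp_apply, CV_eq_CV_upStartWalk (h0 ω) (by simpa [h0 ω] using hpm ω 0)]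
    congr 2
    funext k
    simp [Z, hX, h0 ω]
  have hCV (j : ℕ) : MeasurableSpace.comap (fun ω => CV (S ω) j) inferInstance
      ≤ MeasurableSpace.comap Z inferInstance := by
    rw [hfactor j, ← MeasurableSpace.comap_comp]
    exact MeasurableSpace.comap_mono ((measurable_CV j).comp measurable_upStartWalk).comap_le
  have hS1 : (fun ω => S ω 1) = X 0 := by
    funext ω
    simp [hX, h0 ω]
  rw [IndepFun_iff_Indep] at hflip
  rw [hS1]
  exact indep_of_indep_of_le_right hflip (iSup_le hCV)

end
end

section
/- For a simple random walk S and every n ≥ 0, σ(S) = σ(T^n(S)) ∨ σ(S_k, k ≤ n), where T^n denotes the n-fold iterate of the Csáki–Vincze transform. -/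
/-! A step of the Csáki–Vincze transform can be undone: `X̄_j = (-1)^ℓ X_1 X_{j+1}`, where the
parity `ℓ` is read off `S_0, …, S_j` and `X_1² = 1`, so `S` is rebuilt recursively from `S_1` and
`T(S)`. Thus `σ(S) = σ(T(S)) ∨ σ(S_1)`. Iterating, undoing `n` steps needs
`S_1, T(S)_1, …, T^{n-1}(S)_1`, and since `T^j(S)_k` only depends on `S_0, …, S_{k+j}`, these are
functions of `S_0, …, S_n`. -/

open MeasureTheory ProbabilityTheory Filter

noncomputable section

structure IsWalk (s : ℕ → ℤ) : Prop where
  zero : s 0 = 0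
  isUnit_step : ∀ i, IsUnit (s (i + 1) - s i)

theorem DependsOn.measurable_comp {Ω ι β : Type*} {α : ι → Type*} {m : MeasurableSpace Ω}
    [MeasurableSpace β] [∀ i, MeasurableSpace (α i)] [∀ i, Countable (α i)]
    [∀ i, MeasurableSingletonClass (α i)] {s : Set ι} [Finite s] {g : (Π i, α i) → β}
    (hg : DependsOn g s) {X : Ω → Π i, α i} (hX : ∀ i ∈ s, Measurable[m] fun ω => X ω i) :
    Measurable[m] fun ω => g (X ω) := by
  rcases isEmpty_or_nonempty Ω with _ | ⟨⟨ω₀⟩⟩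
  · exact measurable_of_empty _
  have : Nonempty β := ⟨g (X ω₀)⟩
  obtain ⟨g', rfl⟩ := dependsOn_iff_exists_comp.mp hg
  exact (measurable_of_countable g').comp
    (measurable_pi_lambda _ fun i => hX i i.2)

theorem dependsOn_cvEll (j : ℕ) : DependsOn (fun S => cvEll S j) (Set.Iic j) := by
  intro S S' h
  simp only [Set.mem_Iic] at h
  refine congrArg Finset.card (Finset.filter_congr fun i hi => ?_)
  rw [Finset.mem_range] at hi
  rw [h (i - 1) (by omega), h (i + 1) (by omega)]

theorem dependsOn_CV_s7 (k : ℕ) : DependsOn (fun S => CV S k) (Set.Iic (k + 1)) := by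
  intro S S' h
  simp only [Set.mem_Iic] at h
  refine Finset.sum_congr rfl fun j hj => ?_
  rw [Finset.mem_range] at hj
  simp only [cvBarX, inc]
  rw [show cvEll S (j + 1) = cvEll S' (j + 1) from
    dependsOn_cvEll (j + 1) fun i hi => h i (by simp at hi; omega)]
  rw [h 0 (by omega), h 1 (by omega), h (j + 1 + 1) (by omega), h (j + 1 + 1 - 1) (by omega)]

theorem dependsOn_CViter (n k : ℕ) : DependsOn (fun S => CViter n S k) (Set.Iic (k + n)) := by
  induction n generalizing k with
  | zero => exact fun S S' h => h k (by simp)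
  | succ n ih =>
    exact fun S S' h => dependsOn_CV_s7 k fun i hi =>
      ih i fun l hl => h l (by simp at hi hl ⊢; omega)

theorem CV_succ (S : ℕ → ℤ) (k : ℕ) : CV S (k + 1) = CV S k + cvBarX S (k + 1) :=
  Finset.sum_range_succ _ _

theorem CViter_succ' (n : ℕ) (S : ℕ → ℤ) : CViter (n + 1) S = CViter n (CV S) := by
  induction n with
  | zero => rfl
  | succ n ih => exact congrArg CV ih

namespace IsWalk

variable {S : ℕ → ℤ}

theorem apply_add_two (hS : IsWalk S) (k : ℕ) :
    S (k + 2) = S (k + 1) + (-1) ^ cvEll S (k + 1) * S 1 * (CV S (k + 1) - CV S k) := by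
  have hS1 : S 1 * S 1 = 1 := by simpa [hS.zero] using Int.isUnit_mul_self (hS.isUnit_step 0)
  have hsign : (-1 : ℤ) ^ cvEll S (k + 1) * (-1) ^ cvEll S (k + 1) = 1 := by
    rw [← pow_add, ← two_mul, pow_mul]; norm_num
  rw [CV_succ, add_sub_cancel_left, cvBarX, inc, inc, Nat.add_sub_cancel, Nat.sub_self, hS.zero]
  linear_combination (S (k + 1) - S (k + 2)) *
    ((-1) ^ cvEll S (k + 1) * (-1) ^ cvEll S (k + 1) * hS1 + hsign)

theorem CV (hS : IsWalk S) : IsWalk (CV S) where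
  zero := Finset.sum_range_zero _
  isUnit_step i := by
    rw [CV_succ, add_sub_cancel_left, cvBarX, inc, inc]
    exact ((isUnit_neg_one.pow _).mul (hS.isUnit_step 0)).mul (hS.isUnit_step (i + 1))

theorem CViter (hS : IsWalk S) (n : ℕ) : IsWalk (CViter n S) := by
  induction n with
  | zero => exact hS
  | succ n ih => exact ih.CV

end IsWalk

section Measurability

variable {Ω : Type*} {m : MeasurableSpace Ω} {X : Ω → ℕ → ℤ}

theorem measurable_of_measurable_CV (hX : ∀ ω, IsWalk (X ω))
    (hCV : ∀ k, Measurable[m] fun ω => CV (X ω) k) (h1 : Measurable[m] fun ω => X ω 1) :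
    ∀ k, Measurable[m] fun ω => X ω k := by
  intro k
  induction k using Nat.strong_induction_on with
  | _ k ih =>
    match k with
    | 0 => simp only [(hX _).zero]; exact measurable_const
    | 1 => exact h1
    | k + 2 =>
      have hℓ : Measurable[m] fun ω => cvEll (X ω) (k + 1) :=
        (dependsOn_cvEll (k + 1)).measurable_comp fun i hi => ih i (by simp at hi; omega)
      simp only [fun ω => (hX ω).apply_add_two k]
      exact (ih (k + 1) (by omega)).add
        (((measurable_const.pow hℓ).mul h1).mul ((hCV (k + 1)).sub (hCV k)))

theorem measurable_of_measurable_CViter (n : ℕ) (hX : ∀ ω, IsWalk (X ω))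
    (hT : ∀ k, Measurable[m] fun ω => CViter n (X ω) k)
    (hinit : ∀ k ≤ n, Measurable[m] fun ω => X ω k) :
    ∀ k, Measurable[m] fun ω => X ω k := by
  induction n generalizing X with
  | zero => exact hT
  | succ n ih =>
    refine measurable_of_measurable_CV hX (ih (fun ω => (hX ω).CV) ?_ ?_) (hinit 1 (by omega))
    · simpa only [CViter_succ'] using hT
    · exact fun k hk =>
        (dependsOn_CV_s7 k).measurable_comp fun i hi => hinit i (by simp at hi; omega)

end Measurability

theorem sigma_eq_cviter_sup_general {Ω : Type*} [MeasurableSpace Ω] (P : Measure Ω)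
    (S : Ω → ℕ → ℤ) (hS : IsSRW P S) (n : ℕ) :
    (⨆ k : ℕ, MeasurableSpace.comap (fun ω => S ω k) inferInstance) =
      (⨆ k : ℕ, MeasurableSpace.comap (fun ω => CViter n (S ω) k) inferInstance) ⊔
        ⨆ k ∈ Set.Iic n, MeasurableSpace.comap (fun ω => S ω k) inferInstance := by
  obtain ⟨h0, hstep, -⟩ := hS
  have hwalk (ω : Ω) : IsWalk (S ω) := ⟨h0 ω, fun i => Int.isUnit_iff.mpr (hstep ω i)⟩
  apply le_antisymm
  · refine iSup_le fun k => (measurable_of_measurable_CViter n hwalk (fun i => ?_)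
      (fun i hi => ?_) k).comap_le
    · exact Measurable.of_comap_le (le_sup_of_le_left (le_iSup_of_le i le_rfl))
    · exact Measurable.of_comap_le (le_sup_of_le_right (le_iSup₂_of_le i hi le_rfl))
  · refine sup_le (iSup_le fun k => Measurable.comap_le ?_)
      (iSup₂_le fun k _ => le_iSup_of_le k le_rfl)
    exact (dependsOn_CViter n k).measurable_comp fun i _ =>
      Measurable.of_comap_le (le_iSup_of_le i le_rfl)

/-- `σ(S) = σ(T^n(S)) ∨ σ(S_k, k ≤ n)`. -/
theorem sigma_eq_cviter_sup {Ω : Type*} [MeasurableSpace Ω] (P : Measure Ω)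
    [IsProbabilityMeasure P] (S : Ω → ℕ → ℤ) (hS : IsSRW P S) (n : ℕ) :
    (⨆ k : ℕ, MeasurableSpace.comap (fun ω => S ω k) inferInstance) =
      (⨆ k : ℕ, MeasurableSpace.comap (fun ω => CViter n (S ω) k) inferInstance) ⊔
        ⨆ k ∈ Set.Iic n, MeasurableSpace.comap (fun ω => S ω k) inferInstance :=
  sigma_eq_cviter_sup_general P S hS n

end
end
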